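/- arXiv:2602.12467 — 4 statements merged into one kernel-verified Lean document; each statement's English description precedes it below -/
import Mathlib

section
/- Let n ≥ 1, t ∈ ℝ, 0 < τ_min ≤ τ_max. Let τ : ℝ^n × ℝ → ℝ satisfy τ_min ≤ τ(u,s) ≤ τ_max and |τ(u,s) − τ(v,s)| ≤ L_τ·‖u − v‖ for all u, v, s. Let s ↦ K(t,s) be integrable on [t−τ_max, t] with ∫_{t−τ_max}^{t} |K(t,s)| ds ≤ C_K. Let F : ℝ × ℝ^n × ℝ^n × ℝ^n → ℝ^n satisfy ‖F(s,u,v,w) − F(s,u',v',w')‖ ≤ L_F·(‖u−u'‖ + ‖v−v'‖ + ‖w−w'‖) for all arguments. Let x, y : ℝ → ℝ^n be continuous with x Lipschitz with constant L_x on [t−τ_max, t]. Then ‖F(t, x(t), x(t−τ(x(t),t)), M[x](t)) − F(t, y(t), y(t−τ(y(t),t)), M[y](t))‖ ≤ L_F·(1 + (L_x·L_τ + 1) + C_K) · sup_{s ∈ [t−τ_max, t]} ‖x(s) − y(s)‖. -/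
/-!
Each of the three slots of `F` moves by at most a multiple of `S = sup_{[t-τmax, t]} ‖x - y‖`.
The current state trivially; the memory term by `‖∫ K (x - y)‖ ≤ (∫ |K|) S`; and the delayed
state by passing through `x (t - τ (y t) t)`: the Lipschitz bounds on `x` and `τ` give
`‖x (t - τ (x t) t) - x (t - τ (y t) t)‖ ≤ Lx Lτ ‖x t - y t‖ ≤ Lx Lτ S`, and the remaining
difference is at most `S` because `τ ≥ τmin > 0` keeps every delayed time inside `[t-τmax, t]`.
-/

open MeasureTheory Set

theorem ContinuousOn.le_ciSup_Icc {g : ℝ → ℝ} {a b s : ℝ} (hg : ContinuousOn g (Icc a b))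
    (hs : s ∈ Icc a b) : g s ≤ ⨆ r : Icc a b, g r := by
  have hbdd : BddAbove (range fun r : Icc a b => g r) := by
    rw [← image_eq_range]
    exact isCompact_Icc.bddAbove_image hg
  exact le_ciSup hbdd (⟨s, hs⟩ : Icc a b)

theorem nonneg_of_forall_nonneg_mul_norm {E : Type*} [NormedAddCommGroup E] [Nontrivial E]
    {L : ℝ} (h : ∀ u : E, 0 ≤ L * ‖u‖) : 0 ≤ L := by
  obtain ⟨e, he⟩ := exists_ne (0 : E)
  exact nonneg_of_mul_nonneg_left (h e) (norm_pos_iff.mpr he)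

theorem norm_comp_delay_sub_le {E : Type*} [NormedAddCommGroup E] {x y : ℝ → E}
    {τ : E → ℝ → ℝ} {I : Set ℝ} {t Lx Lτ δ : ℝ}
    (hLx : 0 ≤ Lx) (hLτ : 0 ≤ Lτ) (ht : t ∈ I) (hτI : ∀ u, t - τ u t ∈ I)
    (hτL : ∀ u v, |τ u t - τ v t| ≤ Lτ * ‖u - v‖)
    (hxL : ∀ a ∈ I, ∀ b ∈ I, ‖x a - x b‖ ≤ Lx * |a - b|)
    (hδ : ∀ s ∈ I, ‖x s - y s‖ ≤ δ) :
    ‖x (t - τ (x t) t) - y (t - τ (y t) t)‖ ≤ (Lx * Lτ + 1) * δ := by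
  have hshift : ‖x (t - τ (x t) t) - x (t - τ (y t) t)‖ ≤ Lx * Lτ * δ :=
    calc ‖x (t - τ (x t) t) - x (t - τ (y t) t)‖
        ≤ Lx * |(t - τ (x t) t) - (t - τ (y t) t)| := hxL _ (hτI _) _ (hτI _)
      _ = Lx * |τ (y t) t - τ (x t) t| := by rw [sub_sub_sub_cancel_left]
      _ ≤ Lx * (Lτ * ‖y t - x t‖) := by gcongr; exact hτL _ _
      _ = Lx * Lτ * ‖x t - y t‖ := by rw [norm_sub_rev]; ring
      _ ≤ Lx * Lτ * δ := by gcongr; exact hδ t ht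
  calc ‖x (t - τ (x t) t) - y (t - τ (y t) t)‖
      ≤ ‖x (t - τ (x t) t) - x (t - τ (y t) t)‖ + ‖x (t - τ (y t) t) - y (t - τ (y t) t)‖ :=
        norm_sub_le_norm_sub_add_norm_sub _ _ _
    _ ≤ Lx * Lτ * δ + δ := add_le_add hshift (hδ _ (hτI _))
    _ = (Lx * Lτ + 1) * δ := by ring

section

variable {E : Type*} [NormedAddCommGroup E] [NormedSpace ℝ E]

theorem norm_integral_smul_le {K : ℝ → ℝ} {h : ℝ → E} {a b δ : ℝ} (hab : a ≤ b)
    (hK : IntervalIntegrable K volume a b) (hh : ∀ s ∈ Icc a b, ‖h s‖ ≤ δ) :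
    ‖∫ s in a..b, K s • h s‖ ≤ (∫ s in a..b, |K s|) * δ := by
  rw [← intervalIntegral.integral_mul_const]
  refine intervalIntegral.norm_integral_le_of_norm_le hab
    (Filter.Eventually.of_forall fun s hs => ?_) (hK.norm.mul_const δ)
  rw [norm_smul, Real.norm_eq_abs]
  exact mul_le_mul_of_nonneg_left (hh s (Ioc_subset_Icc_self hs)) (abs_nonneg _)

theorem norm_integral_smul_sub_le {K : ℝ → ℝ} {f g : ℝ → E} {a b C δ : ℝ} (hab : a ≤ b)
    (hK : IntervalIntegrable K volume a b) (hC : ∫ s in a..b, |K s| ≤ C)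
    (hf : ContinuousOn f (Icc a b)) (hg : ContinuousOn g (Icc a b))
    (hδ : ∀ s ∈ Icc a b, ‖f s - g s‖ ≤ δ) :
    ‖(∫ s in a..b, K s • f s) - ∫ s in a..b, K s • g s‖ ≤ C * δ := by
  have hδ0 : 0 ≤ δ := (norm_nonneg _).trans (hδ b ⟨hab, le_rfl⟩)
  rw [← intervalIntegral.integral_sub (hK.smul_continuousOn (uIcc_of_le hab ▸ hf))
    (hK.smul_continuousOn (uIcc_of_le hab ▸ hg))]
  simp only [← smul_sub]
  exact (norm_integral_smul_le hab hK hδ).trans (mul_le_mul_of_nonneg_right hC hδ0)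

end

theorem stmt_4_general (n : ℕ) (hn : 1 ≤ n) (t τmin τmax Lτ Lx CK LF : ℝ)
    (hτmin : 0 < τmin)
    (τ : EuclideanSpace ℝ (Fin n) → ℝ → ℝ)
    (hτb : ∀ (u : EuclideanSpace ℝ (Fin n)) (s : ℝ), τ u s ∈ Icc τmin τmax)
    (hτL : ∀ (u v : EuclideanSpace ℝ (Fin n)) (s : ℝ), |τ u s - τ v s| ≤ Lτ * ‖u - v‖)
    (K : ℝ → ℝ → ℝ)
    (hK : IntervalIntegrable (fun s => K t s) volume (t - τmax) t)
    (hCK : (∫ s in (t - τmax)..t, |K t s|) ≤ CK)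
    (F : ℝ → EuclideanSpace ℝ (Fin n) → EuclideanSpace ℝ (Fin n) →
      EuclideanSpace ℝ (Fin n) → EuclideanSpace ℝ (Fin n))
    (hF : ∀ (s : ℝ) (u v w u' v' w' : EuclideanSpace ℝ (Fin n)),
      ‖F s u v w - F s u' v' w'‖ ≤ LF * (‖u - u'‖ + ‖v - v'‖ + ‖w - w'‖))
    (x y : ℝ → EuclideanSpace ℝ (Fin n)) (hx : Continuous x) (hy : Continuous y)
    (hxL : ∀ a ∈ Icc (t - τmax) t, ∀ b ∈ Icc (t - τmax) t, ‖x a - x b‖ ≤ Lx * |a - b|) :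
    ‖F t (x t) (x (t - τ (x t) t)) (∫ s in (t - τmax)..t, K t s • x s) -
        F t (y t) (y (t - τ (y t) t)) (∫ s in (t - τmax)..t, K t s • y s)‖ ≤
      LF * (1 + (Lx * Lτ + 1) + CK) * ⨆ s : Icc (t - τmax) t, ‖x s.1 - y s.1‖ := by
  have hτmax : 0 < τmax := (hτmin.trans_le (hτb 0 t).1).trans_le (hτb 0 t).2
  have ht : t ∈ Icc (t - τmax) t := ⟨by linarith, le_rfl⟩
  have hτI : ∀ u, t - τ u t ∈ Icc (t - τmax) t := fun u =>
    ⟨by linarith [(hτb u t).2], by linarith [(hτb u t).1]⟩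
  have : Nonempty (Fin n) := ⟨⟨0, hn⟩⟩
  have hLF : 0 ≤ LF := nonneg_of_forall_nonneg_mul_norm fun u =>
    (norm_nonneg _).trans (by simpa using hF t u 0 0 0 0 0)
  have hLτ : 0 ≤ Lτ := nonneg_of_forall_nonneg_mul_norm fun u =>
    (abs_nonneg _).trans (by simpa using hτL u 0 t)
  have hLx : 0 ≤ Lx := nonneg_of_mul_nonneg_left
    ((norm_nonneg _).trans (hxL _ (hτI 0) t ht))
    (by simpa using (hτmin.trans_le (hτb 0 t).1).ne')
  set S := ⨆ s : Icc (t - τmax) t, ‖x s.1 - y s.1‖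
  have hS : ∀ s ∈ Icc (t - τmax) t, ‖x s - y s‖ ≤ S := fun s hs =>
    (hx.sub hy).norm.continuousOn.le_ciSup_Icc hs
  have hdelay := norm_comp_delay_sub_le hLx hLτ ht hτI (hτL · · t) hxL hS
  have hmemory :=
    norm_integral_smul_sub_le (by linarith) hK hCK hx.continuousOn hy.continuousOn hS
  calc _ ≤ LF * (‖x t - y t‖ + ‖x (t - τ (x t) t) - y (t - τ (y t) t)‖ +
          ‖(∫ s in (t - τmax)..t, K t s • x s) - ∫ s in (t - τmax)..t, K t s • y s‖) := hF ..
    _ ≤ LF * (S + (Lx * Lτ + 1) * S + CK * S) := by gcongr; exact hS t ht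
    _ = LF * (1 + (Lx * Lτ + 1) + CK) * S := by ring

/-- Local Lipschitz continuity of the right-hand side of the state-dependent delay
equation with distributed memory: under the stated Lipschitz and integrability
hypotheses,
`‖F(t, x t, x(t−τ(x t,t)), M[x](t)) − F(t, y t, y(t−τ(y t,t)), M[y](t))‖
  ≤ L_F·(1 + (L_x·L_τ + 1) + C_K) · sup_{s ∈ [t−τ_max,t]} ‖x s − y s‖`. -/
theorem stmt_4 (n : ℕ) (hn : 1 ≤ n) (t τmin τmax Lτ Lx CK LF : ℝ)
    (hτmin : 0 < τmin) (hττ : τmin ≤ τmax)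
    (τ : EuclideanSpace ℝ (Fin n) → ℝ → ℝ)
    (hτb : ∀ (u : EuclideanSpace ℝ (Fin n)) (s : ℝ), τ u s ∈ Icc τmin τmax)
    (hτL : ∀ (u v : EuclideanSpace ℝ (Fin n)) (s : ℝ), |τ u s - τ v s| ≤ Lτ * ‖u - v‖)
    (K : ℝ → ℝ → ℝ)
    (hK : IntervalIntegrable (fun s => K t s) volume (t - τmax) t)
    (hCK : (∫ s in (t - τmax)..t, |K t s|) ≤ CK)
    (F : ℝ → EuclideanSpace ℝ (Fin n) → EuclideanSpace ℝ (Fin n) →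
      EuclideanSpace ℝ (Fin n) → EuclideanSpace ℝ (Fin n))
    (hF : ∀ (s : ℝ) (u v w u' v' w' : EuclideanSpace ℝ (Fin n)),
      ‖F s u v w - F s u' v' w'‖ ≤ LF * (‖u - u'‖ + ‖v - v'‖ + ‖w - w'‖))
    (x y : ℝ → EuclideanSpace ℝ (Fin n)) (hx : Continuous x) (hy : Continuous y)
    (hxL : ∀ a ∈ Icc (t - τmax) t, ∀ b ∈ Icc (t - τmax) t, ‖x a - x b‖ ≤ Lx * |a - b|) :
    ‖F t (x t) (x (t - τ (x t) t)) (∫ s in (t - τmax)..t, K t s • x s) -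
        F t (y t) (y (t - τ (y t) t)) (∫ s in (t - τmax)..t, K t s • y s)‖ ≤
      LF * (1 + (Lx * Lτ + 1) + CK) * ⨆ s : Icc (t - τmax) t, ‖x s.1 - y s.1‖ :=
  stmt_4_general n hn t τmin τmax Lτ Lx CK LF hτmin τ hτb hτL K hK hCK F hF x y hx hy hxL
end

section
/- Let n ≥ 1, 0 < τ_min ≤ τ_max, T > 0, R > 0. Let τ : ℝ^n × ℝ → ℝ satisfy τ_min ≤ τ(u,s) ≤ τ_max for all u, s; let K : ℝ → ℝ be integrable on [0, τ_max] with ∫_0^{τ_max} |K(u)| du ≤ C_K; let F : ℝ × ℝ^n × ℝ^n × ℝ^n → ℝ^n be continuous and satisfy ‖F(s,u,v,w)‖ ≤ M_F whenever s ∈ [0,T], ‖u‖ ≤ R, ‖v‖ ≤ R, ‖w‖ ≤ C_K·R. Let φ : ℝ → ℝ^n be continuous with sup_{θ ∈ [−τ_max,0]} ‖φ(θ)‖ ≤ R − T·M_F. Then for every continuous x : ℝ → ℝ^n equal to φ on [−τ_max, 0] with sup_{s ∈ [−τ_max,T]} ‖x(s)‖ ≤ R, the function 𝒯x satisfies sup_{t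 ∈ [−τ_max,T]} ‖(𝒯x)(t)‖ ≤ R; that is, 𝒯 maps the closed ball of radius R into itself. -/
open MeasureTheory Set

/-- The solution operator `𝒯` of the state-dependent delay equation with distributed
memory: `(𝒯x)(t) = φ(t)` for `t ≤ 0` and
`(𝒯x)(t) = φ(0) + ∫_0^t F(s, x s, x(s−τ(x s,s)), M[x](s)) ds` for `t > 0`, where
`M[x](s) = ∫_{s−τ_max}^s K(s−u)•x(u) du`. -/
noncomputable def solOp {n : ℕ} (τmax : ℝ)
    (τ : EuclideanSpace ℝ (Fin n) → ℝ → ℝ) (K : ℝ → ℝ)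
    (F : ℝ → EuclideanSpace ℝ (Fin n) → EuclideanSpace ℝ (Fin n) →
      EuclideanSpace ℝ (Fin n) → EuclideanSpace ℝ (Fin n))
    (φ x : ℝ → EuclideanSpace ℝ (Fin n)) (t : ℝ) : EuclideanSpace ℝ (Fin n) :=
  if t ≤ 0 then φ t
  else φ 0 + ∫ s in (0 : ℝ)..t,
    F s (x s) (x (s - τ (x s) s)) (∫ u in (s - τmax)..s, K (s - u) • x u)

/-!
On `[-τ_max, 0]` the image `𝒯x` is `φ = x`, which lies in the ball by assumption. For `t > 0`
every argument of `F` along the integral stays in the region where `‖F‖ ≤ M_F`: the delayed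
argument because `s - τ ∈ [-τ_max, T]`, the memory term because its norm is at most
`(∫_0^{τ_max} |K|) · R ≤ C_K R`. Hence `‖(𝒯x)(t)‖ ≤ ‖φ 0‖ + t M_F ≤ R - T M_F + t M_F ≤ R`,
the last step because `M_F`, bounding a norm, is nonnegative.
-/

theorem IsCompact.le_of_iSup_subtype_le {X : Type*} [TopologicalSpace X] {s : Set X}
    {f : X → ℝ} (hs : IsCompact s) (hf : ContinuousOn f s) {C : ℝ}
    (h : (⨆ x : s, f x) ≤ C) {x : X} (hx : x ∈ s) : f x ≤ C := by
  have hbdd : BddAbove (range fun y : s => f y) := by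
    rw [← image_eq_range]
    exact hs.bddAbove_image hf
  exact (le_ciSup hbdd ⟨x, hx⟩).trans h

theorem norm_integral_kernel_smul_le {E : Type*} [NormedAddCommGroup E] [NormedSpace ℝ E]
    {K : ℝ → ℝ} {x : ℝ → E} {a s R : ℝ} (ha : 0 ≤ a) (hK : IntervalIntegrable K volume 0 a)
    (hx : ∀ u ∈ Icc (s - a) s, ‖x u‖ ≤ R) :
    ‖∫ u in (s - a)..s, K (s - u) • x u‖ ≤ (∫ v in (0 : ℝ)..a, |K v|) * R := by
  have hKs : IntervalIntegrable (fun u => |K (s - u)| * R) volume (s - a) s := by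
    simpa using (hK.abs.comp_sub_left s).symm.mul_const R
  calc ‖∫ u in (s - a)..s, K (s - u) • x u‖
      ≤ ∫ u in (s - a)..s, |K (s - u)| * R := by
        refine intervalIntegral.norm_integral_le_of_norm_le (by linarith)
          (ae_of_all _ fun u hu => ?_) hKs
        rw [norm_smul, Real.norm_eq_abs]
        exact mul_le_mul_of_nonneg_left (hx u (Ioc_subset_Icc_self hu)) (abs_nonneg _)
    _ = (∫ v in (0 : ℝ)..a, |K v|) * R := by
        rw [intervalIntegral.integral_mul_const,
          intervalIntegral.integral_comp_sub_left (fun v => |K v|) s]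
        simp

section SolutionOperator

variable {n : ℕ} {τmax T R CK MF : ℝ} {τ : EuclideanSpace ℝ (Fin n) → ℝ → ℝ} {K : ℝ → ℝ}
  {F : ℝ → EuclideanSpace ℝ (Fin n) → EuclideanSpace ℝ (Fin n) →
    EuclideanSpace ℝ (Fin n) → EuclideanSpace ℝ (Fin n)}
  {φ x : ℝ → EuclideanSpace ℝ (Fin n)}

theorem norm_integrand_solOp_le (hτ : ∀ u s, τ u s ∈ Icc 0 τmax)
    (hK : IntervalIntegrable K volume 0 τmax) (hCK : (∫ u in (0 : ℝ)..τmax, |K u|) ≤ CK)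
    (hR : 0 ≤ R)
    (hFb : ∀ (s : ℝ) (u v w : EuclideanSpace ℝ (Fin n)),
      s ∈ Icc (0 : ℝ) T → ‖u‖ ≤ R → ‖v‖ ≤ R → ‖w‖ ≤ CK * R → ‖F s u v w‖ ≤ MF)
    (hx : ∀ s ∈ Icc (-τmax) T, ‖x s‖ ≤ R) {s : ℝ} (hs : s ∈ Icc 0 T) :
    ‖F s (x s) (x (s - τ (x s) s)) (∫ u in (s - τmax)..s, K (s - u) • x u)‖ ≤ MF := by
  obtain ⟨hτ0, hτmax⟩ := hτ (x s) s
  refine hFb s _ _ _ hs (hx s ⟨by linarith [hs.1], hs.2⟩)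
    (hx _ ⟨by linarith [hs.1], by linarith [hs.2]⟩) ?_
  calc ‖∫ u in (s - τmax)..s, K (s - u) • x u‖
      ≤ (∫ v in (0 : ℝ)..τmax, |K v|) * R :=
        norm_integral_kernel_smul_le (hτ0.trans hτmax) hK
          fun u hu => hx u ⟨by linarith [hu.1, hs.1], hu.2.trans hs.2⟩
    _ ≤ CK * R := mul_le_mul_of_nonneg_right hCK hR

theorem norm_solOp_le (hτ : ∀ u s, τ u s ∈ Icc 0 τmax)
    (hK : IntervalIntegrable K volume 0 τmax) (hCK : (∫ u in (0 : ℝ)..τmax, |K u|) ≤ CK)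
    (hR : 0 ≤ R)
    (hFb : ∀ (s : ℝ) (u v w : EuclideanSpace ℝ (Fin n)),
      s ∈ Icc (0 : ℝ) T → ‖u‖ ≤ R → ‖v‖ ≤ R → ‖w‖ ≤ CK * R → ‖F s u v w‖ ≤ MF)
    (hφ0 : ‖φ 0‖ ≤ R - T * MF) (hxφ : ∀ θ ∈ Icc (-τmax) (0 : ℝ), x θ = φ θ)
    (hx : ∀ s ∈ Icc (-τmax) T, ‖x s‖ ≤ R) {t : ℝ} (ht : t ∈ Icc (-τmax) T) :
    ‖solOp τmax τ K F φ x t‖ ≤ R := by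
  unfold solOp
  split_ifs with ht0
  · rw [← hxφ t ⟨ht.1, ht0⟩]
    exact hx t ht
  · push Not at ht0
    have hF : ∀ s ∈ uIoc 0 t,
        ‖F s (x s) (x (s - τ (x s) s)) (∫ u in (s - τmax)..s, K (s - u) • x u)‖ ≤ MF := by
      intro s hs
      rw [uIoc_of_le ht0.le] at hs
      exact norm_integrand_solOp_le hτ hK hCK hR hFb hx ⟨hs.1.le, hs.2.trans ht.2⟩
    have hMF : 0 ≤ MF := (norm_nonneg _).trans (hF t (by simp [uIoc_of_le ht0.le, ht0]))
    calc _ ≤ ‖φ 0‖ + MF * |t - 0| :=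
          (norm_add_le _ _).trans
            (add_le_add_right (intervalIntegral.norm_integral_le_of_norm_le_const hF) _)
      _ ≤ R - T * MF + MF * t := by rw [sub_zero, abs_of_pos ht0]; gcongr
      _ ≤ R := by nlinarith [ht.2]

end SolutionOperator

theorem stmt_6_general (n : ℕ) (τmin τmax T R CK MF : ℝ)
    (hτmin : 0 < τmin) (hR : 0 < R)
    (τ : EuclideanSpace ℝ (Fin n) → ℝ → ℝ)
    (hτb : ∀ (u : EuclideanSpace ℝ (Fin n)) (s : ℝ), τ u s ∈ Icc τmin τmax)
    (K : ℝ → ℝ) (hK : IntervalIntegrable K volume 0 τmax)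
    (hCK : (∫ u in (0 : ℝ)..τmax, |K u|) ≤ CK)
    (F : ℝ → EuclideanSpace ℝ (Fin n) → EuclideanSpace ℝ (Fin n) →
      EuclideanSpace ℝ (Fin n) → EuclideanSpace ℝ (Fin n))
    (hFb : ∀ (s : ℝ) (u v w : EuclideanSpace ℝ (Fin n)),
      s ∈ Icc (0 : ℝ) T → ‖u‖ ≤ R → ‖v‖ ≤ R → ‖w‖ ≤ CK * R → ‖F s u v w‖ ≤ MF)
    (φ : ℝ → EuclideanSpace ℝ (Fin n)) (hφ : Continuous φ)
    (hφb : (⨆ θ : Icc (-τmax) (0 : ℝ), ‖φ θ.1‖) ≤ R - T * MF) :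
    ∀ x : ℝ → EuclideanSpace ℝ (Fin n), Continuous x →
      (∀ θ ∈ Icc (-τmax) (0 : ℝ), x θ = φ θ) →
      (⨆ s : Icc (-τmax) T, ‖x s.1‖) ≤ R →
      (⨆ t : Icc (-τmax) T, ‖solOp τmax τ K F φ x t.1‖) ≤ R := by
  intro x hx hxφ hxR
  have hτ : ∀ u s, τ u s ∈ Icc 0 τmax := fun u s => ⟨hτmin.le.trans (hτb u s).1, (hτb u s).2⟩
  have hxR' : ∀ s ∈ Icc (-τmax) T, ‖x s‖ ≤ R :=
    fun s hs => isCompact_Icc.le_of_iSup_subtype_le hx.norm.continuousOn hxR hs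
  have hφ0 : ‖φ 0‖ ≤ R - T * MF :=
    isCompact_Icc.le_of_iSup_subtype_le hφ.norm.continuousOn hφb
      ⟨neg_nonpos.2 ((hτ 0 0).1.trans (hτ 0 0).2), le_rfl⟩
  exact Real.iSup_le (fun t => norm_solOp_le hτ hK hCK hR.le hFb hφ0 hxφ hxR' t.2) hR.le

/-- Self-mapping property of the solution operator: if `‖F‖ ≤ M_F` on the relevant
bounded region and `sup_{[−τ_max,0]} ‖φ‖ ≤ R − T·M_F`, then for every continuous `x`
equal to `φ` on `[−τ_max, 0]` with `sup_{[−τ_max,T]} ‖x‖ ≤ R` one has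
`sup_{[−τ_max,T]} ‖𝒯x‖ ≤ R`. -/
theorem stmt_6 (n : ℕ) (hn : 1 ≤ n) (τmin τmax T R CK MF : ℝ)
    (hτmin : 0 < τmin) (hττ : τmin ≤ τmax) (hT : 0 < T) (hR : 0 < R)
    (τ : EuclideanSpace ℝ (Fin n) → ℝ → ℝ)
    (hτb : ∀ (u : EuclideanSpace ℝ (Fin n)) (s : ℝ), τ u s ∈ Icc τmin τmax)
    (K : ℝ → ℝ) (hK : IntervalIntegrable K volume 0 τmax)
    (hCK : (∫ u in (0 : ℝ)..τmax, |K u|) ≤ CK)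
    (F : ℝ → EuclideanSpace ℝ (Fin n) → EuclideanSpace ℝ (Fin n) →
      EuclideanSpace ℝ (Fin n) → EuclideanSpace ℝ (Fin n))
    (hFc : Continuous fun p : ℝ × EuclideanSpace ℝ (Fin n) × EuclideanSpace ℝ (Fin n) ×
      EuclideanSpace ℝ (Fin n) => F p.1 p.2.1 p.2.2.1 p.2.2.2)
    (hFb : ∀ (s : ℝ) (u v w : EuclideanSpace ℝ (Fin n)),
      s ∈ Icc (0 : ℝ) T → ‖u‖ ≤ R → ‖v‖ ≤ R → ‖w‖ ≤ CK * R → ‖F s u v w‖ ≤ MF)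
    (φ : ℝ → EuclideanSpace ℝ (Fin n)) (hφ : Continuous φ)
    (hφb : (⨆ θ : Icc (-τmax) (0 : ℝ), ‖φ θ.1‖) ≤ R - T * MF) :
    ∀ x : ℝ → EuclideanSpace ℝ (Fin n), Continuous x →
      (∀ θ ∈ Icc (-τmax) (0 : ℝ), x θ = φ θ) →
      (⨆ s : Icc (-τmax) T, ‖x s.1‖) ≤ R →
      (⨆ t : Icc (-τmax) T, ‖solOp τmax τ K F φ x t.1‖) ≤ R :=
  stmt_6_general n τmin τmax T R CK MF hτmin hR τ hτb K hK hCK F hFb φ hφ hφb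
end

section
/- Local well-posedness (Theorem 2.1, integral form). Let n ≥ 1 and 0 < τ_min ≤ τ_max. Let τ : ℝ^n × ℝ → ℝ be continuous with τ_min ≤ τ(u,s) ≤ τ_max and |τ(u,s) − τ(v,s)| ≤ L_τ·‖u − v‖ for all u, v, s. Let K : ℝ → ℝ be integrable on [0, τ_max]. Let F : ℝ × ℝ^n × ℝ^n × ℝ^n → ℝ^n be continuous and satisfy ‖F(s,u,v,w) − F(s,u',v',w')‖ ≤ L_F·(‖u−u'‖ + ‖v−v'‖ + ‖w−w'‖) for all arguments. Let φ : [−τ_max, 0] → ℝ^n be Lipschitz continuous. Then there exists T₀ > 0 and a unique continuous function x : [−τ_max, T₀] → ℝ^n such that x(θ) = φ(θ) for θ ∈ [−τ_max, 0] and x(t) = φ(0) + ∫_0^t F(s, x(s), x(s−τ(x(s),s)), ∫_{s−τ_max}^{s} K(s−u)·x(u) du) ds for all t ∈ [0, T₀]. -/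
/-!
For `T ≤ τ_min` and `s ∈ [0, T]` the delayed time `s - τ(x(s), s)` lies in the history interval
`[-τ_max, 0]`, where every candidate solution equals the Lipschitz function `φ`. So the Picard
operator `x ↦ φ(0) + ∫₀ᵗ F(s, x(s), x(s - τ(x(s), s)), M[x](s)) ds`, acting on continuous
functions on `[-τ_max, T]` that extend `φ`, is Lipschitz with constant
`T · L_F · (1 + L_φ L_τ + ‖K‖_{L¹(0, τ_max)})`. For small `T` it is a contraction of this closed
set, and Banach's fixed point theorem gives existence and uniqueness.
-/

open MeasureTheory Set
open scoped NNReal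

/-- `x` is a solution on `[−τ_max, T₀]` of the integral form of the state-dependent
delay differential equation with distributed memory, with initial history `φ`:
`x` is continuous on `[−τ_max, T₀]`, equals `φ` on `[−τ_max, 0]`, and satisfies
`x(t) = φ(0) + ∫_0^t F(s, x s, x(s−τ(x s,s)), ∫_{s−τ_max}^s K(s−u)•x(u) du) ds`
for all `t ∈ [0, T₀]`. -/
def IsIntSol {n : ℕ} (τmax : ℝ)
    (τ : EuclideanSpace ℝ (Fin n) → ℝ → ℝ) (K : ℝ → ℝ)
    (F : ℝ → EuclideanSpace ℝ (Fin n) → EuclideanSpace ℝ (Fin n) →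
      EuclideanSpace ℝ (Fin n) → EuclideanSpace ℝ (Fin n))
    (φ : ℝ → EuclideanSpace ℝ (Fin n)) (T₀ : ℝ)
    (x : ℝ → EuclideanSpace ℝ (Fin n)) : Prop :=
  ContinuousOn x (Icc (-τmax) T₀) ∧
  (∀ θ ∈ Icc (-τmax) (0 : ℝ), x θ = φ θ) ∧
  ∀ t ∈ Icc (0 : ℝ) T₀,
    x t = φ 0 + ∫ s in (0 : ℝ)..t,
      F s (x s) (x (s - τ (x s) s)) (∫ u in (s - τmax)..s, K (s - u) • x u)

namespace DistributedMemoryDDE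

variable {E : Type*} [NormedAddCommGroup E] [NormedSpace ℝ E]

noncomputable def memory (c : ℝ) (K : ℝ → ℝ) (z : ℝ → E) (s : ℝ) : E :=
  ∫ u in (s - c)..s, K (s - u) • z u

section Memory

variable {c : ℝ} {K : ℝ → ℝ}

theorem memory_eq_integral_shift (z : ℝ → E) (s : ℝ) :
    memory c K z s = ∫ v in (0 : ℝ)..c, K v • z (s - v) := by
  simpa [memory] using (intervalIntegral.integral_comp_sub_left (a := 0) (b := c)
    (fun u => K (s - u) • z u) s).symm

theorem memory_congr (hc : 0 ≤ c) {z w : ℝ → E} {s : ℝ} (h : EqOn z w (Icc (s - c) s)) :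
    memory c K z s = memory c K w s :=
  intervalIntegral.integral_congr fun u hu => by
    rw [uIcc_of_le (by linarith)] at hu
    simp only [h hu]

theorem continuous_memory (hc : 0 ≤ c) (hK : IntervalIntegrable K volume 0 c) {z : ℝ → E}
    (hz : Continuous z) {B : ℝ} (hB : ∀ t, ‖z t‖ ≤ B) : Continuous (memory c K z) := by
  simp_rw [funext (memory_eq_integral_shift (c := c) (K := K) z)]
  have hKm : AEStronglyMeasurable K (volume.restrict (uIoc 0 c)) := by
    rw [uIoc_of_le hc]
    exact hK.1.aestronglyMeasurable
  refine intervalIntegral.continuous_of_dominated_interval (bound := fun v => |K v| * B)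
    (fun s => hKm.smul (by fun_prop : Continuous fun v => z (s - v)).aestronglyMeasurable)
    (fun s => ae_of_all _ fun v _ => ?_) (by simpa using hK.norm.mul_const B)
    (ae_of_all _ fun v _ => by fun_prop)
  rw [norm_smul, Real.norm_eq_abs]
  exact mul_le_mul_of_nonneg_left (hB _) (abs_nonneg _)

theorem norm_memory_sub_le (hc : 0 ≤ c) (hK : IntervalIntegrable K volume 0 c) {z w : ℝ → E}
    (hz : Continuous z) (hw : Continuous w) {D : ℝ} (hD : ∀ t, ‖z t - w t‖ ≤ D) (s : ℝ) :
    ‖memory c K z s - memory c K w s‖ ≤ (∫ v in (0 : ℝ)..c, |K v|) * D := by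
  have hint : ∀ {y : ℝ → E}, Continuous y →
      IntervalIntegrable (fun v => K v • y (s - v)) volume 0 c := fun {y} hy => by
    rw [intervalIntegrable_iff_integrableOn_Icc_of_le hc] at hK ⊢
    exact hK.smul_continuousOn (by fun_prop) isCompact_Icc
  rw [memory_eq_integral_shift, memory_eq_integral_shift,
    ← intervalIntegral.integral_sub (hint hz) (hint hw), ← intervalIntegral.integral_mul_const]
  refine intervalIntegral.norm_integral_le_of_norm_le hc (ae_of_all _ fun v _ => ?_)
    (by simpa using hK.norm.mul_const D)
  rw [← smul_sub, norm_smul, Real.norm_eq_abs]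
  exact mul_le_mul_of_nonneg_left (hD _) (abs_nonneg _)

end Memory

noncomputable def delayRhs (c : ℝ) (τ : E → ℝ → ℝ) (K : ℝ → ℝ) (F : ℝ → E → E → E → E)
    (z : ℝ → E) (s : ℝ) : E :=
  F s (z s) (z (s - τ (z s) s)) (memory c K z s)

section DelayRhs

variable {c : ℝ} {τ : E → ℝ → ℝ} {K : ℝ → ℝ} {F : ℝ → E → E → E → E}

theorem continuous_delayRhs (hτ : Continuous fun p : E × ℝ => τ p.1 p.2)
    (hF : Continuous fun p : ℝ × E × E × E => F p.1 p.2.1 p.2.2.1 p.2.2.2)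
    (hc : 0 ≤ c) (hK : IntervalIntegrable K volume 0 c) {z : ℝ → E} (hz : Continuous z)
    {B : ℝ} (hB : ∀ t, ‖z t‖ ≤ B) : Continuous (delayRhs c τ K F z) := by
  have hdelay : Continuous fun s => z (s - τ (z s) s) :=
    hz.comp (continuous_id.sub (hτ.comp (hz.prodMk continuous_id)))
  exact hF.comp (continuous_id.prodMk (hz.prodMk (hdelay.prodMk (continuous_memory hc hK hz hB))))

theorem delayRhs_congr {s : ℝ} (hτ : ∀ u, τ u s ∈ Icc 0 c) {z w : ℝ → E}
    (h : EqOn z w (Icc (s - c) s)) : delayRhs c τ K F z s = delayRhs c τ K F w s := by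
  have hc : 0 ≤ c := (hτ 0).1.trans (hτ 0).2
  have hs : s ∈ Icc (s - c) s := ⟨by linarith, le_rfl⟩
  have hdelay : s - τ (z s) s ∈ Icc (s - c) s :=
    ⟨by linarith [(hτ (z s)).2], by linarith [(hτ (z s)).1]⟩
  simp only [delayRhs, memory_congr hc h, ← h hs, h hdelay]

theorem norm_delayRhs_sub_le {s : ℝ} {Lτ LF Lψ : ℝ≥0} (hτ : LipschitzWith Lτ fun u => τ u s)
    (hF : ∀ u v w u' v' w', ‖F s u v w - F s u' v' w'‖ ≤ LF * (‖u - u'‖ + ‖v - v'‖ + ‖w - w'‖))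
    (hc : 0 ≤ c) (hK : IntervalIntegrable K volume 0 c)
    {ψ : ℝ → E} {A : Set ℝ} (hψ : LipschitzOnWith Lψ ψ A) (hA : ∀ u, s - τ u s ∈ A)
    {z w : ℝ → E} (hz : Continuous z) (hw : Continuous w) (hzψ : EqOn z ψ A) (hwψ : EqOn w ψ A)
    {D : ℝ} (hD : ∀ t, ‖z t - w t‖ ≤ D) :
    ‖delayRhs c τ K F z s - delayRhs c τ K F w s‖
      ≤ LF * (1 + Lψ * Lτ + ∫ v in (0 : ℝ)..c, |K v|) * D := by
  have hdelay : ‖z (s - τ (z s) s) - w (s - τ (w s) s)‖ ≤ Lψ * Lτ * D := by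
    rw [← dist_eq_norm, hzψ (hA _), hwψ (hA _), mul_assoc]
    calc dist (ψ (s - τ (z s) s)) (ψ (s - τ (w s) s))
        ≤ Lψ * dist (τ (z s) s) (τ (w s) s) := by
          simpa only [dist_sub_left] using hψ.dist_le_mul _ (hA (z s)) _ (hA (w s))
      _ ≤ Lψ * (Lτ * D) := by
          gcongr
          exact (hτ.dist_le_mul _ _).trans (by rw [dist_eq_norm]; gcongr; exact hD s)
  calc ‖delayRhs c τ K F z s - delayRhs c τ K F w s‖
      ≤ LF * (‖z s - w s‖ + ‖z (s - τ (z s) s) - w (s - τ (w s) s)‖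
          + ‖memory c K z s - memory c K w s‖) := hF _ _ _ _ _ _
    _ ≤ LF * (D + Lψ * Lτ * D + (∫ v in (0 : ℝ)..c, |K v|) * D) := by
        gcongr
        exacts [hD s, norm_memory_sub_le hc hK hz hw hD s]
    _ = LF * (1 + Lψ * Lτ + ∫ v in (0 : ℝ)..c, |K v|) * D := by ring

end DelayRhs

/-- Clamping `t` makes `picard c τ K F φ z` equal to `φ` for `t ≤ 0` and to
`φ 0 + ∫₀ᵗ delayRhs c τ K F z` for `t ≥ 0`, with no case split. -/
noncomputable def picard (c : ℝ) (τ : E → ℝ → ℝ) (K : ℝ → ℝ) (F : ℝ → E → E → E → E)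
    (φ z : ℝ → E) (t : ℝ) : E :=
  φ (min t 0) + ∫ s in (0 : ℝ)..max t 0, delayRhs c τ K F z s

section Picard

variable {c : ℝ} {τ : E → ℝ → ℝ} {K : ℝ → ℝ} {F : ℝ → E → E → E → E} {φ : ℝ → E}

theorem picard_of_nonpos (z : ℝ → E) {t : ℝ} (ht : t ≤ 0) : picard c τ K F φ z t = φ t := by
  simp [picard, ht]

theorem picard_of_nonneg (z : ℝ → E) {t : ℝ} (ht : 0 ≤ t) :
    picard c τ K F φ z t = φ 0 + ∫ s in (0 : ℝ)..t, delayRhs c τ K F z s := by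
  simp [picard, ht]

theorem continuousOn_picard (hc : 0 ≤ c) (hφ : ContinuousOn φ (Icc (-c) 0)) {z : ℝ → E}
    (hG : Continuous (delayRhs c τ K F z)) : ContinuousOn (picard c τ K F φ z) (Ici (-c)) := by
  have hhist : ContinuousOn (fun t => φ (min t 0)) (Ici (-c)) :=
    hφ.comp (by fun_prop) fun t ht => ⟨le_min ht (neg_nonpos.2 hc), min_le_right _ _⟩
  have hint : Continuous fun t => ∫ s in (0 : ℝ)..max t 0, delayRhs c τ K F z s :=
    (intervalIntegral.continuous_primitive (fun _ _ => hG.intervalIntegrable _ _) 0).comp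
      (continuous_id.max continuous_const)
  exact hhist.add hint.continuousOn

theorem picard_congr {T : ℝ} (hT : 0 ≤ T) (hτ : ∀ u s, τ u s ∈ Icc 0 c) {z w : ℝ → E}
    (h : EqOn z w (Icc (-c) T)) : EqOn (picard c τ K F φ z) (picard c τ K F φ w) (Icc (-c) T) := by
  intro t ht
  simp only [picard]
  congr 1
  refine intervalIntegral.integral_congr fun s hs => delayRhs_congr (hτ · s) (h.mono ?_)
  rw [uIcc_of_le (le_max_right _ _)] at hs
  exact Icc_subset_Icc (by linarith [hs.1]) (hs.2.trans (max_le ht.2 hT))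

theorem norm_picard_sub_le {T : ℝ} (hT : 0 ≤ T) {Lτ LF Lφ : ℝ≥0} (hτ : ∀ u s, τ u s ∈ Icc T c)
    (hτL : ∀ s, LipschitzWith Lτ fun u => τ u s)
    (hF : ∀ s u v w u' v' w', ‖F s u v w - F s u' v' w'‖ ≤ LF * (‖u - u'‖ + ‖v - v'‖ + ‖w - w'‖))
    (hK : IntervalIntegrable K volume 0 c) (hφ : LipschitzOnWith Lφ φ (Icc (-c) 0))
    {z w : ℝ → E} (hz : Continuous z) (hw : Continuous w)
    (hGz : Continuous (delayRhs c τ K F z)) (hGw : Continuous (delayRhs c τ K F w))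
    (hzφ : EqOn z φ (Icc (-c) 0)) (hwφ : EqOn w φ (Icc (-c) 0))
    {D : ℝ} (hD : ∀ t, ‖z t - w t‖ ≤ D) {t : ℝ} (ht : t ≤ T) :
    ‖picard c τ K F φ z t - picard c τ K F φ w t‖
      ≤ T * (LF * (1 + Lφ * Lτ + ∫ v in (0 : ℝ)..c, |K v|) * D) := by
  have hc : 0 ≤ c := hT.trans ((hτ 0 0).1.trans (hτ 0 0).2)
  have hD0 : 0 ≤ D := (norm_nonneg _).trans (hD 0)
  have hκ : 0 ≤ ∫ v in (0 : ℝ)..c, |K v| :=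
    intervalIntegral.integral_nonneg hc fun _ _ => abs_nonneg _
  have hbound : ∀ s ∈ uIoc 0 (max t 0), ‖delayRhs c τ K F z s - delayRhs c τ K F w s‖
      ≤ LF * (1 + Lφ * Lτ + ∫ v in (0 : ℝ)..c, |K v|) * D := by
    intro s hs
    rw [uIoc_of_le (le_max_right _ _)] at hs
    have hsT : s ≤ T := hs.2.trans (max_le ht hT)
    refine norm_delayRhs_sub_le (hτL s) (hF s) hc hK hφ (fun u => ⟨?_, ?_⟩) hz hw hzφ hwφ hD
    · linarith [hs.1, (hτ u s).2]
    · linarith [hsT, (hτ u s).1]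
  rw [picard, picard, add_sub_add_left_eq_sub,
    ← intervalIntegral.integral_sub (hGz.intervalIntegrable _ _) (hGw.intervalIntegrable _ _)]
  refine (intervalIntegral.norm_integral_le_of_norm_le_const hbound).trans ?_
  rw [mul_comm T]
  gcongr
  rw [sub_zero, abs_of_nonneg (le_max_right _ _)]
  exact max_le ht hT

end Picard

theorem existsUnique_isFixedPt_of_mapsTo_of_dist_le {α : Type*} [MetricSpace α] [CompleteSpace α]
    {S : Set α} (hS : IsClosed S) (hne : S.Nonempty) {f : α → α} (hfS : MapsTo f S S) {q : ℝ}
    (hq : q < 1) (hf : ∀ x ∈ S, ∀ y ∈ S, dist (f x) (f y) ≤ q * dist x y) :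
    ∃! x, x ∈ S ∧ Function.IsFixedPt f x := by
  have hcontr : ContractingWith q.toNNReal (hfS.restrict f S S) :=
    ⟨Real.toNNReal_lt_one.2 hq, LipschitzWith.of_dist_le' fun x y => hf x x.2 y y.2⟩
  obtain ⟨x₀, hx₀⟩ := hne
  obtain ⟨x, hxS, hx, -⟩ :=
    hcontr.exists_fixedPoint' hS.isComplete hfS hx₀ (edist_ne_top _ _)
  refine ⟨x, ⟨hxS, hx⟩, fun y ⟨hyS, hy⟩ => ?_⟩
  exact congrArg Subtype.val <|
    hcontr.fixedPoint_unique' (x := ⟨y, hyS⟩) (y := ⟨x, hxS⟩) (Subtype.ext hy) (Subtype.ext hx)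

section IntegralEquation

variable {n : ℕ} {c T : ℝ} {τ : EuclideanSpace ℝ (Fin n) → ℝ → ℝ} {K : ℝ → ℝ}
  {F : ℝ → EuclideanSpace ℝ (Fin n) → EuclideanSpace ℝ (Fin n) → EuclideanSpace ℝ (Fin n) →
    EuclideanSpace ℝ (Fin n)}
  {φ : ℝ → EuclideanSpace ℝ (Fin n)}

local notation "ℝⁿ" => EuclideanSpace ℝ (Fin n)

theorem isIntSol_iff (hc : 0 ≤ c) (hT : 0 ≤ T) {x : ℝ → ℝⁿ} :
    IsIntSol c τ K F φ T x ↔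
      ContinuousOn x (Icc (-c) T) ∧ EqOn x (picard c τ K F φ x) (Icc (-c) T) := by
  constructor
  · rintro ⟨hx, hhist, heq⟩
    refine ⟨hx, fun t ht => ?_⟩
    rcases le_total t 0 with htn | htp
    · rw [picard_of_nonpos _ htn]
      exact hhist t ⟨ht.1, htn⟩
    · rw [picard_of_nonneg _ htp]
      exact heq t ⟨htp, ht.2⟩
  · rintro ⟨hx, hfix⟩
    refine ⟨hx, fun θ hθ => ?_, fun t ht => ?_⟩
    · rw [hfix ⟨hθ.1, hθ.2.trans hT⟩, picard_of_nonpos _ hθ.2]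
    · rw [hfix ⟨by linarith [ht.1], ht.2⟩, picard_of_nonneg _ ht.1]
      rfl

theorem isIntSol_IccExtend_of_isFixedPt (hc : 0 ≤ c) (hT : 0 ≤ T) (hcT : -c ≤ T)
    {P : C(Icc (-c) T, ℝⁿ) → C(Icc (-c) T, ℝⁿ)}
    (hP : ∀ x t, P x t = picard c τ K F φ (IccExtend hcT x) t) {x : C(Icc (-c) T, ℝⁿ)}
    (hx : Function.IsFixedPt P x) : IsIntSol c τ K F φ T (IccExtend hcT x) := by
  refine (isIntSol_iff hc hT).2 ⟨x.continuous.Icc_extend'.continuousOn, fun t ht => ?_⟩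
  rw [IccExtend_of_mem hcT _ ht]
  exact (DFunLike.congr_fun hx ⟨t, ht⟩).symm.trans (hP x ⟨t, ht⟩)

theorem exists_isFixedPt_of_isIntSol (hT : 0 ≤ T) (hcT : -c ≤ T) (hτ : ∀ u s, τ u s ∈ Icc 0 c)
    {P : C(Icc (-c) T, ℝⁿ) → C(Icc (-c) T, ℝⁿ)}
    (hP : ∀ x t, P x t = picard c τ K F φ (IccExtend hcT x) t) {y : ℝ → ℝⁿ}
    (hy : IsIntSol c τ K F φ T y) :
    ∃ x : C(Icc (-c) T, ℝⁿ), Function.IsFixedPt P x ∧ EqOn (IccExtend hcT x) y (Icc (-c) T) := by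
  have hc : 0 ≤ c := (hτ 0 0).1.trans (hτ 0 0).2
  obtain ⟨hyc, hyfix⟩ := (isIntSol_iff hc hT).1 hy
  let x : C(Icc (-c) T, ℝⁿ) := ⟨(Icc (-c) T).domRestrict y, hyc.domRestrict⟩
  have hxy : EqOn (IccExtend hcT x) y (Icc (-c) T) := fun t ht => IccExtend_of_mem hcT _ ht
  refine ⟨x, ContinuousMap.ext fun t => ?_, hxy⟩
  rw [hP, picard_congr hT hτ hxy t.2, ← hyfix t.2]
  rfl

theorem exists_isIntSol_and_eqOn_of_lt_one (hT : 0 ≤ T) {Lτ LF Lφ : ℝ≥0}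
    (hτ : ∀ u s, τ u s ∈ Icc T c) (hτc : Continuous fun p : ℝⁿ × ℝ => τ p.1 p.2)
    (hτL : ∀ s, LipschitzWith Lτ fun u => τ u s) (hK : IntervalIntegrable K volume 0 c)
    (hFc : Continuous fun p : ℝ × ℝⁿ × ℝⁿ × ℝⁿ => F p.1 p.2.1 p.2.2.1 p.2.2.2)
    (hF : ∀ s u v w u' v' w', ‖F s u v w - F s u' v' w'‖ ≤ LF * (‖u - u'‖ + ‖v - v'‖ + ‖w - w'‖))
    (hφ : LipschitzOnWith Lφ φ (Icc (-c) 0))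
    (hTC : T * (LF * (1 + Lφ * Lτ + ∫ v in (0 : ℝ)..c, |K v|)) < 1) :
    (∃ x, IsIntSol c τ K F φ T x) ∧
      ∀ x y, IsIntSol c τ K F φ T x → IsIntSol c τ K F φ T y → EqOn x y (Icc (-c) T) := by
  have hc : 0 ≤ c := hT.trans ((hτ 0 0).1.trans (hτ 0 0).2)
  have hcT : -c ≤ T := by linarith
  have hκ : 0 ≤ ∫ v in (0 : ℝ)..c, |K v| :=
    intervalIntegral.integral_nonneg hc fun _ _ => abs_nonneg _
  have hτ₀ : ∀ u s, τ u s ∈ Icc 0 c := fun u s => ⟨hT.trans (hτ u s).1, (hτ u s).2⟩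
  let ext : C(Icc (-c) T, ℝⁿ) → ℝ → ℝⁿ := fun x => IccExtend hcT x
  have hext : ∀ x, Continuous (ext x) := fun x => x.continuous.Icc_extend'
  have hG : ∀ x, Continuous (delayRhs c τ K F (ext x)) := fun x =>
    continuous_delayRhs hτc hFc hc hK (hext x) fun t => x.norm_coe_le_norm _
  let P : C(Icc (-c) T, ℝⁿ) → C(Icc (-c) T, ℝⁿ) :=
    fun x => ⟨(Icc (-c) T).domRestrict (picard c τ K F φ (ext x)),
      ((continuousOn_picard hc hφ.continuousOn (hG x)).mono Icc_subset_Ici_self).domRestrict⟩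
  let S := {x : C(Icc (-c) T, ℝⁿ) | EqOn (ext x) φ (Icc (-c) 0)}
  have hS : IsClosed S := by
    simp only [S, EqOn, ofPred_forall]
    exact isClosed_iInter fun t => isClosed_iInter fun _ =>
      isClosed_eq (continuous_eval_const _) continuous_const
  have hPS : ∀ x, P x ∈ S := fun x t ht => by
    simp only [ext, P, IccExtend_of_mem hcT _ ⟨ht.1, ht.2.trans hT⟩]
    exact picard_of_nonpos _ ht.2
  have hPq : ∀ x ∈ S, ∀ y ∈ S, dist (P x) (P y) ≤
      T * (LF * (1 + Lφ * Lτ + ∫ v in (0 : ℝ)..c, |K v|)) * dist x y := by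
    intro x hx y hy
    refine (ContinuousMap.dist_le (by positivity)).2 fun t => ?_
    rw [dist_eq_norm, mul_assoc]
    exact norm_picard_sub_le hT hτ hτL hF hK hφ (hext x) (hext y) (hG x) (hG y) hx hy
      (fun t => by rw [← dist_eq_norm]; exact ContinuousMap.dist_apply_le_dist _) t.2.2
  obtain ⟨x, ⟨-, hx⟩, huniq⟩ := existsUnique_isFixedPt_of_mapsTo_of_dist_le hS ⟨P 0, hPS 0⟩
    (fun x _ => hPS x) hTC hPq
  refine ⟨⟨ext x, isIntSol_IccExtend_of_isFixedPt hc hT hcT (P := P) (fun _ _ => rfl) hx⟩,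
    fun y₁ y₂ h₁ h₂ t ht => ?_⟩
  obtain ⟨x₁, hx₁, hx₁y⟩ := exists_isFixedPt_of_isIntSol hT hcT hτ₀ (P := P) (fun _ _ => rfl) h₁
  obtain ⟨x₂, hx₂, hx₂y⟩ := exists_isFixedPt_of_isIntSol hT hcT hτ₀ (P := P) (fun _ _ => rfl) h₂
  rw [← hx₁y ht, ← hx₂y ht, huniq x₁ ⟨hx₁ ▸ hPS x₁, hx₁⟩, huniq x₂ ⟨hx₂ ▸ hPS x₂, hx₂⟩]

end IntegralEquation

end DistributedMemoryDDE

theorem stmt_7_general (n : ℕ) (τmin τmax Lτ LF : ℝ)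
    (hτmin : 0 < τmin)
    (τ : EuclideanSpace ℝ (Fin n) → ℝ → ℝ)
    (hτc : Continuous fun p : EuclideanSpace ℝ (Fin n) × ℝ => τ p.1 p.2)
    (hτb : ∀ (u : EuclideanSpace ℝ (Fin n)) (s : ℝ), τ u s ∈ Icc τmin τmax)
    (hτL : ∀ (u v : EuclideanSpace ℝ (Fin n)) (s : ℝ), |τ u s - τ v s| ≤ Lτ * ‖u - v‖)
    (K : ℝ → ℝ) (hK : IntervalIntegrable K volume 0 τmax)
    (F : ℝ → EuclideanSpace ℝ (Fin n) → EuclideanSpace ℝ (Fin n) →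
      EuclideanSpace ℝ (Fin n) → EuclideanSpace ℝ (Fin n))
    (hFc : Continuous fun p : ℝ × EuclideanSpace ℝ (Fin n) × EuclideanSpace ℝ (Fin n) ×
      EuclideanSpace ℝ (Fin n) => F p.1 p.2.1 p.2.2.1 p.2.2.2)
    (hFL : ∀ (s : ℝ) (u v w u' v' w' : EuclideanSpace ℝ (Fin n)),
      ‖F s u v w - F s u' v' w'‖ ≤ LF * (‖u - u'‖ + ‖v - v'‖ + ‖w - w'‖))
    (φ : ℝ → EuclideanSpace ℝ (Fin n))
    (hφ : ∃ Lφ : NNReal, LipschitzOnWith Lφ φ (Icc (-τmax) 0)) :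
    ∃ T₀ > 0,
      (∃ x : ℝ → EuclideanSpace ℝ (Fin n), IsIntSol τmax τ K F φ T₀ x) ∧
      ∀ x y : ℝ → EuclideanSpace ℝ (Fin n),
        IsIntSol τmax τ K F φ T₀ x → IsIntSol τmax τ K F φ T₀ y →
        EqOn x y (Icc (-τmax) T₀) := by
  obtain ⟨Lφ, hφ⟩ := hφ
  have hτL' : ∀ s, LipschitzWith Lτ.toNNReal fun u => τ u s := fun s =>
    LipschitzWith.of_dist_le' fun u v => by
      simpa only [dist_eq_norm, Real.norm_eq_abs] using hτL u v s
  have hFL' : ∀ s u v w u' v' w', ‖F s u v w - F s u' v' w'‖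
      ≤ LF.toNNReal * (‖u - u'‖ + ‖v - v'‖ + ‖w - w'‖) := fun s u v w u' v' w' =>
    (hFL s u v w u' v' w').trans (by gcongr; exact Real.le_coe_toNNReal LF)
  have hτmax : 0 ≤ τmax := hτmin.le.trans ((hτb 0 0).1.trans (hτb 0 0).2)
  have hκ : 0 ≤ ∫ v in (0 : ℝ)..τmax, |K v| :=
    intervalIntegral.integral_nonneg hτmax fun _ _ => abs_nonneg _
  set C := LF.toNNReal * (1 + Lφ * Lτ.toNNReal + ∫ v in (0 : ℝ)..τmax, |K v|)
  have hC : 0 ≤ C := by positivity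
  refine ⟨min τmin (1 / (C + 1)), by positivity,
    DistributedMemoryDDE.exists_isIntSol_and_eqOn_of_lt_one (by positivity)
      (fun u s => Icc_subset_Icc_left (min_le_left _ _) (hτb u s)) hτc hτL' hK hFc hFL' hφ ?_⟩
  calc min τmin (1 / (C + 1)) * C ≤ 1 / (C + 1) * C := by gcongr; exact min_le_right _ _
    _ < 1 := by rw [one_div_mul_eq_div, div_lt_one (by positivity)]; linarith

/-- Local well-posedness (Theorem 2.1, integral form): under the assumptions
(A1)–(A3), for every Lipschitz initial history `φ` there exist `T₀ > 0` and a unique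
continuous solution of the integral equation on `[−τ_max, T₀]`. -/
theorem stmt_7 (n : ℕ) (hn : 1 ≤ n) (τmin τmax Lτ LF : ℝ)
    (hτmin : 0 < τmin) (hττ : τmin ≤ τmax)
    (τ : EuclideanSpace ℝ (Fin n) → ℝ → ℝ)
    (hτc : Continuous fun p : EuclideanSpace ℝ (Fin n) × ℝ => τ p.1 p.2)
    (hτb : ∀ (u : EuclideanSpace ℝ (Fin n)) (s : ℝ), τ u s ∈ Icc τmin τmax)
    (hτL : ∀ (u v : EuclideanSpace ℝ (Fin n)) (s : ℝ), |τ u s - τ v s| ≤ Lτ * ‖u - v‖)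
    (K : ℝ → ℝ) (hK : IntervalIntegrable K volume 0 τmax)
    (F : ℝ → EuclideanSpace ℝ (Fin n) → EuclideanSpace ℝ (Fin n) →
      EuclideanSpace ℝ (Fin n) → EuclideanSpace ℝ (Fin n))
    (hFc : Continuous fun p : ℝ × EuclideanSpace ℝ (Fin n) × EuclideanSpace ℝ (Fin n) ×
      EuclideanSpace ℝ (Fin n) => F p.1 p.2.1 p.2.2.1 p.2.2.2)
    (hFL : ∀ (s : ℝ) (u v w u' v' w' : EuclideanSpace ℝ (Fin n)),
      ‖F s u v w - F s u' v' w'‖ ≤ LF * (‖u - u'‖ + ‖v - v'‖ + ‖w - w'‖))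
    (φ : ℝ → EuclideanSpace ℝ (Fin n))
    (hφ : ∃ Lφ : NNReal, LipschitzOnWith Lφ φ (Icc (-τmax) 0)) :
    ∃ T₀ > 0,
      (∃ x : ℝ → EuclideanSpace ℝ (Fin n), IsIntSol τmax τ K F φ T₀ x) ∧
      ∀ x y : ℝ → EuclideanSpace ℝ (Fin n),
        IsIntSol τmax τ K F φ T₀ x → IsIntSol τmax τ K F φ T₀ y →
        EqOn x y (Icc (-τmax) T₀) :=
  stmt_7_general n τmin τmax Lτ LF hτmin τ hτc hτb hτL K hK F hFc hFL φ hφ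
end

section
/- Continuous dependence on the initial history. Let n ≥ 1, 0 < τ_min ≤ τ_max, and let L₀, R₀ > 0. Let τ : ℝ^n × ℝ → ℝ be continuous with τ_min ≤ τ(u,s) ≤ τ_max and |τ(u,s) − τ(v,s)| ≤ L_τ·‖u − v‖; let K : ℝ → ℝ be integrable on [0, τ_max]; let F : ℝ × ℝ^n × ℝ^n × ℝ^n → ℝ^n be continuous with ‖F(s,u,v,w) − F(s,u',v',w')‖ ≤ L_F·(‖u−u'‖ + ‖v−v'‖ + ‖w−w'‖). Then there exist T₀ > 0 and C ≥ 0 such that for all initial histories φ, ψ : [−τ_max, 0] → ℝ^n that are Lipschitz with constant L₀ and bounded in supremum norm by R₀, and all continuous solutions x, y : [−τ_max, T₀] → ℝ^n of the integral equation x(t) = φ(0) + ∫_0^t F(s, x(s), x(s−τ(x(s),s)), M[x](s)) ds with x = φ on [−τ_max,0] (respectively with initial history ψ for y), one has sup_{t ∈ [−τ_max, T₀]} ‖x(t) − y(t)‖ ≤ C · sup_{θ ∈ [−τ_max, 0]} ‖φ(θ) − ψ(θ)‖. -/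
/-!
Take `T₀ ≤ τ_min`. Then for `s ∈ [0, T₀]` every delayed argument `s - τ(x(s), s)` lies in the
initial interval, where `x = φ` is `L₀`-Lipschitz, so the delayed terms of the two solutions differ
by at most `L₀ L_τ ‖x(s) - y(s)‖ + D`, with `D` the sup-distance of the histories. The memory terms
differ by at most `‖K‖_{L¹(0, τ_max)} G`, with `G` the sup-distance of the solutions. Integrating
the Lipschitz bound of `F` gives `G ≤ (1 + T₀ L_F) D + T₀ L_F (1 + L₀ L_τ + ‖K‖₁) G`, and `T₀` is
chosen so small that the last coefficient is at most `1/2`, whence `G ≤ 2 (1 + T₀ L_F) D`.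
-/

open MeasureTheory Set

open intervalIntegral
open scoped Interval

theorem IsCompact.le_ciSup_of_continuousOn {α : Type*} [TopologicalSpace α] {s : Set α}
    {f : α → ℝ} (hs : IsCompact s) (hf : ContinuousOn f s) {a : α} (ha : a ∈ s) :
    f a ≤ ⨆ b : s, f b :=
  le_ciSup (by simpa only [image_eq_range] using hs.bddAbove_image hf) (⟨a, ha⟩ : s)

theorem le_posPart_mul_of_le_mul {a b c : ℝ} (h : a ≤ b * c) (hc : 0 ≤ c) : a ≤ b⁺ * c :=
  h.trans (mul_le_mul_of_nonneg_right (le_posPart b) hc)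

theorem sub_mem_Icc_of_mem_Icc {a b c s v : ℝ} (hs : s ∈ Icc a b) (hv : v ∈ Icc 0 c) :
    s - v ∈ Icc (a - c) b :=
  ⟨by linarith [hs.1, hv.2], by linarith [hs.2, hv.1]⟩

section Memory

variable {E : Type*} [NormedAddCommGroup E] [NormedSpace ℝ E] {τmax : ℝ} {K : ℝ → ℝ}

noncomputable def memoryOp (τmax : ℝ) (K : ℝ → ℝ) (x : ℝ → E) (s : ℝ) : E :=
  ∫ u in (s - τmax)..s, K (s - u) • x u

theorem memoryOp_eq_integral_lag (x : ℝ → E) (s : ℝ) :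
    memoryOp τmax K x s = ∫ v in (0 : ℝ)..τmax, K v • x (s - v) := by
  simpa [memoryOp] using
    (integral_comp_sub_left (fun u => K (s - u) • x u) s (a := 0) (b := τmax)).symm

theorem intervalIntegrable_smul_lag (hτ : 0 ≤ τmax) (hK : IntervalIntegrable K volume 0 τmax)
    {x : ℝ → E} {s : ℝ} (hx : ContinuousOn x (Icc (s - τmax) s)) :
    IntervalIntegrable (fun v => K v • x (s - v)) volume 0 τmax := by
  refine hK.smul_continuousOn (hx.comp (continuousOn_const.sub continuousOn_id) fun v hv => ?_)
  rw [uIcc_of_le hτ] at hv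
  exact sub_mem_Icc_of_mem_Icc (left_mem_Icc.2 le_rfl) hv

theorem norm_memoryOp_sub_le (hτ : 0 ≤ τmax) (hK : IntervalIntegrable K volume 0 τmax)
    {x y : ℝ → E} {s G : ℝ} (hx : ContinuousOn x (Icc (s - τmax) s))
    (hy : ContinuousOn y (Icc (s - τmax) s)) (hG : ∀ u ∈ Icc (s - τmax) s, ‖x u - y u‖ ≤ G) :
    ‖memoryOp τmax K x s - memoryOp τmax K y s‖ ≤ (∫ v in (0 : ℝ)..τmax, |K v|) * G := by
  rw [memoryOp_eq_integral_lag, memoryOp_eq_integral_lag,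
    ← integral_sub (intervalIntegrable_smul_lag hτ hK hx) (intervalIntegrable_smul_lag hτ hK hy),
    ← intervalIntegral.integral_mul_const]
  refine norm_integral_le_of_norm_le hτ (ae_of_all _ fun v hv => ?_) (hK.abs.mul_const G)
  rw [← smul_sub, norm_smul, Real.norm_eq_abs]
  exact mul_le_mul_of_nonneg_left
    (hG _ (sub_mem_Icc_of_mem_Icc (right_mem_Icc.2 le_rfl) (Ioc_subset_Icc_self hv)))
    (abs_nonneg _)

theorem continuousOn_memoryOp (hτ : 0 ≤ τmax) (hK : IntervalIntegrable K volume 0 τmax)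
    {x : ℝ → E} {a b : ℝ} (hx : ContinuousOn x (Icc (a - τmax) b)) :
    ContinuousOn (memoryOp τmax K x) (Icc a b) := by
  obtain ⟨B, hB⟩ := isCompact_Icc.exists_bound_of_continuousOn hx
  have hlag : ∀ v ∈ Ι 0 τmax, MapsTo (fun σ => σ - v) (Icc a b) (Icc (a - τmax) b) :=
    fun v hv σ hσ => sub_mem_Icc_of_mem_Icc hσ (Ioc_subset_Icc_self (uIoc_of_le hτ ▸ hv))
  rw [show memoryOp τmax K x = fun s => ∫ v in (0 : ℝ)..τmax, K v • x (s - v) from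
    funext (memoryOp_eq_integral_lag x)]
  intro s hs
  refine continuousWithinAt_of_dominated_interval (bound := fun v => |K v| * B) ?_ ?_
    (hK.abs.mul_const B) (ae_of_all _ fun v hv => ?_)
  · filter_upwards [self_mem_nhdsWithin] with σ hσ
    exact (intervalIntegrable_smul_lag hτ hK
      (hx.mono (Icc_subset_Icc (by linarith [hσ.1]) hσ.2))).def'.aestronglyMeasurable
  · filter_upwards [self_mem_nhdsWithin] with σ hσ
    refine ae_of_all _ fun v hv => ?_
    rw [norm_smul, Real.norm_eq_abs]
    exact mul_le_mul_of_nonneg_left (hB _ (hlag v hv hσ)) (abs_nonneg _)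
  · exact ((hx.comp (continuousOn_id.sub continuousOn_const) (hlag v hv)) s hs).const_smul (K v)

end Memory

section Delay

variable {E : Type*} [NormedAddCommGroup E]
  {τmin τmax Lτ LF L₀ D G T : ℝ} {τ : E → ℝ → ℝ} {K : ℝ → ℝ} {F : ℝ → E → E → E → E}
  {φ ψ x y : ℝ → E}

theorem norm_delayed_sub_le (hτb : ∀ u s, τ u s ∈ Icc τmin τmax)
    (hτL : ∀ u v s, |τ u s - τ v s| ≤ Lτ * ‖u - v‖) (hL₀ : 0 ≤ L₀)
    (hφL : ∀ a ∈ Icc (-τmax) (0 : ℝ), ∀ b ∈ Icc (-τmax) (0 : ℝ), ‖φ a - φ b‖ ≤ L₀ * |a - b|)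
    (hD : ∀ θ ∈ Icc (-τmax) (0 : ℝ), ‖φ θ - ψ θ‖ ≤ D)
    (hxφ : ∀ θ ∈ Icc (-τmax) (0 : ℝ), x θ = φ θ) (hyψ : ∀ θ ∈ Icc (-τmax) (0 : ℝ), y θ = ψ θ)
    {s : ℝ} (hs : s ∈ Icc 0 τmin) :
    ‖x (s - τ (x s) s) - y (s - τ (y s) s)‖ ≤ L₀ * (Lτ * ‖x s - y s‖) + D := by
  have hpast : ∀ u, s - τ u s ∈ Icc (-τmax) (0 : ℝ) := fun u =>
    ⟨by linarith [hs.1, (hτb u s).2], by linarith [hs.2, (hτb u s).1]⟩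
  have hφ := hφL _ (hpast (x s)) _ (hpast (y s))
  rw [sub_sub_sub_cancel_left, abs_sub_comm] at hφ
  rw [hxφ _ (hpast _), hyψ _ (hpast _)]
  calc ‖φ (s - τ (x s) s) - ψ (s - τ (y s) s)‖
      ≤ ‖φ (s - τ (x s) s) - φ (s - τ (y s) s)‖ + ‖φ (s - τ (y s) s) - ψ (s - τ (y s) s)‖ :=
        norm_sub_le_norm_sub_add_norm_sub _ _ _
    _ ≤ L₀ * (Lτ * ‖x s - y s‖) + D :=
        add_le_add (hφ.trans (mul_le_mul_of_nonneg_left (hτL _ _ _) hL₀)) (hD _ (hpast _))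

variable [NormedSpace ℝ E]

noncomputable def delayRhs (τmax : ℝ) (τ : E → ℝ → ℝ) (K : ℝ → ℝ) (F : ℝ → E → E → E → E)
    (x : ℝ → E) (s : ℝ) : E :=
  F s (x s) (x (s - τ (x s) s)) (memoryOp τmax K x s)

theorem continuousOn_delayRhs (hτc : Continuous fun p : E × ℝ => τ p.1 p.2)
    (hτb : ∀ u s, τ u s ∈ Icc 0 τmax) (hK : IntervalIntegrable K volume 0 τmax)
    (hFc : Continuous fun p : ℝ × E × E × E => F p.1 p.2.1 p.2.2.1 p.2.2.2)
    (hx : ContinuousOn x (Icc (-τmax) T)) :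
    ContinuousOn (delayRhs τmax τ K F x) (Icc 0 T) := by
  have hτ : 0 ≤ τmax := (hτb 0 0).1.trans (hτb 0 0).2
  rw [← zero_sub] at hx
  have hx₀ : ContinuousOn x (Icc 0 T) := hx.mono (Icc_subset_Icc (by linarith) le_rfl)
  have hdelayed : ContinuousOn (fun s => x (s - τ (x s) s)) (Icc 0 T) :=
    hx.comp (continuousOn_id.sub (hτc.comp_continuousOn (hx₀.prodMk continuousOn_id)))
      fun s hs => sub_mem_Icc_of_mem_Icc hs (hτb (x s) s)
  exact hFc.comp_continuousOn (continuousOn_id.prodMk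
    (hx₀.prodMk (hdelayed.prodMk (continuousOn_memoryOp hτ hK hx))))

theorem norm_delayRhs_sub_le (hτb : ∀ u s, τ u s ∈ Icc τmin τmax)
    (hτL : ∀ u v s, |τ u s - τ v s| ≤ Lτ * ‖u - v‖) (hK : IntervalIntegrable K volume 0 τmax)
    (hFL : ∀ s u v w u' v' w', ‖F s u v w - F s u' v' w'‖ ≤ LF * (‖u - u'‖ + ‖v - v'‖ + ‖w - w'‖))
    (hLF : 0 ≤ LF) (hLτ : 0 ≤ Lτ) (hL₀ : 0 ≤ L₀)
    (hφL : ∀ a ∈ Icc (-τmax) (0 : ℝ), ∀ b ∈ Icc (-τmax) (0 : ℝ), ‖φ a - φ b‖ ≤ L₀ * |a - b|)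
    (hD : ∀ θ ∈ Icc (-τmax) (0 : ℝ), ‖φ θ - ψ θ‖ ≤ D)
    (hxφ : ∀ θ ∈ Icc (-τmax) (0 : ℝ), x θ = φ θ) (hyψ : ∀ θ ∈ Icc (-τmax) (0 : ℝ), y θ = ψ θ)
    (hT : T ≤ τmin) (hx : ContinuousOn x (Icc (-τmax) T)) (hy : ContinuousOn y (Icc (-τmax) T))
    (hG : ∀ t ∈ Icc (-τmax) T, ‖x t - y t‖ ≤ G) {s : ℝ} (hs : s ∈ Icc 0 T) :
    ‖delayRhs τmax τ K F x s - delayRhs τmax τ K F y s‖ ≤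
      LF * ((1 + L₀ * Lτ + ∫ v in (0 : ℝ)..τmax, |K v|) * G + D) := by
  have hτ : 0 ≤ τmax := by linarith [hs.1, hs.2, (hτb 0 0).1, (hτb 0 0).2]
  have hwindow : Icc (s - τmax) s ⊆ Icc (-τmax) T := Icc_subset_Icc (by linarith [hs.1]) hs.2
  have hnow : ‖x s - y s‖ ≤ G := hG s (hwindow (right_mem_Icc.2 (by linarith)))
  have hdelayed := norm_delayed_sub_le hτb hτL hL₀ hφL hD hxφ hyψ ⟨hs.1, hs.2.trans hT⟩
  have hmemory := norm_memoryOp_sub_le hτ hK (hx.mono hwindow) (hy.mono hwindow)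
    fun u hu => hG u (hwindow hu)
  calc ‖delayRhs τmax τ K F x s - delayRhs τmax τ K F y s‖
      ≤ LF * (‖x s - y s‖ + ‖x (s - τ (x s) s) - y (s - τ (y s) s)‖
        + ‖memoryOp τmax K x s - memoryOp τmax K y s‖) := hFL _ _ _ _ _ _ _
    _ ≤ LF * (G + (L₀ * (Lτ * G) + D) + (∫ v in (0 : ℝ)..τmax, |K v|) * G) := by
        gcongr
        exact hdelayed.trans (by gcongr)
    _ = LF * ((1 + L₀ * Lτ + ∫ v in (0 : ℝ)..τmax, |K v|) * G + D) := by ring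

end Delay

section Solutions

variable {n : ℕ} {τmin τmax Lτ LF L₀ D G T : ℝ} {τ : EuclideanSpace ℝ (Fin n) → ℝ → ℝ}
  {K : ℝ → ℝ} {F : ℝ → EuclideanSpace ℝ (Fin n) → EuclideanSpace ℝ (Fin n) →
    EuclideanSpace ℝ (Fin n) → EuclideanSpace ℝ (Fin n)}
  {φ ψ x y : ℝ → EuclideanSpace ℝ (Fin n)}

theorem norm_sub_le_of_isIntSol (hτc : Continuous fun p : EuclideanSpace ℝ (Fin n) × ℝ => τ p.1 p.2)
    (hτb : ∀ u s, τ u s ∈ Icc τmin τmax)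
    (hτL : ∀ u v s, |τ u s - τ v s| ≤ Lτ * ‖u - v‖) (hK : IntervalIntegrable K volume 0 τmax)
    (hFc : Continuous fun p : ℝ × EuclideanSpace ℝ (Fin n) × EuclideanSpace ℝ (Fin n) ×
      EuclideanSpace ℝ (Fin n) => F p.1 p.2.1 p.2.2.1 p.2.2.2)
    (hFL : ∀ s u v w u' v' w', ‖F s u v w - F s u' v' w'‖ ≤ LF * (‖u - u'‖ + ‖v - v'‖ + ‖w - w'‖))
    (hLF : 0 ≤ LF) (hLτ : 0 ≤ Lτ) (hL₀ : 0 ≤ L₀)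
    (hφL : ∀ a ∈ Icc (-τmax) (0 : ℝ), ∀ b ∈ Icc (-τmax) (0 : ℝ), ‖φ a - φ b‖ ≤ L₀ * |a - b|)
    (hT : T ≤ τmin) (hx : IsIntSol τmax τ K F φ T x) (hy : IsIntSol τmax τ K F ψ T y)
    (hD : ∀ θ ∈ Icc (-τmax) (0 : ℝ), ‖φ θ - ψ θ‖ ≤ D)
    (hG : ∀ t ∈ Icc (-τmax) T, ‖x t - y t‖ ≤ G) {t : ℝ} (ht : t ∈ Icc 0 T) :
    ‖x t - y t‖ ≤ D + t * (LF * ((1 + L₀ * Lτ + ∫ v in (0 : ℝ)..τmax, |K v|) * G + D)) := by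
  obtain ⟨hxc, hxφ, hxeq⟩ := hx
  obtain ⟨hyc, hyψ, hyeq⟩ := hy
  have hτb₀ : ∀ u s, τ u s ∈ Icc 0 τmax := fun u s =>
    ⟨by linarith [ht.1, ht.2, (hτb u s).1], (hτb u s).2⟩
  have hrhs : ∀ z, ContinuousOn z (Icc (-τmax) T) →
      IntervalIntegrable (delayRhs τmax τ K F z) volume 0 t := fun z hz =>
    ((continuousOn_delayRhs hτc hτb₀ hK hFc hz).mono
      (by rw [uIcc_of_le ht.1]; exact Icc_subset_Icc le_rfl ht.2)).intervalIntegrable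
  have hxt : x t = φ 0 + ∫ s in (0 : ℝ)..t, delayRhs τmax τ K F x s := hxeq t ht
  have hyt : y t = ψ 0 + ∫ s in (0 : ℝ)..t, delayRhs τmax τ K F y s := hyeq t ht
  rw [hxt, hyt, add_sub_add_comm, ← integral_sub (hrhs x hxc) (hrhs y hyc)]
  calc _ ≤ ‖φ 0 - ψ 0‖ + ‖∫ s in (0 : ℝ)..t, delayRhs τmax τ K F x s - delayRhs τmax τ K F y s‖ :=
        norm_add_le _ _
    _ ≤ D + LF * ((1 + L₀ * Lτ + ∫ v in (0 : ℝ)..τmax, |K v|) * G + D) * |t - 0| := by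
        refine add_le_add (hD 0 ⟨by linarith [(hτb₀ 0 0).1, (hτb₀ 0 0).2], le_rfl⟩)
          (norm_integral_le_of_norm_le_const fun s hs => ?_)
        rw [uIoc_of_le ht.1] at hs
        exact norm_delayRhs_sub_le hτb hτL hK hFL hLF hLτ hL₀ hφL hD hxφ hyψ hT hxc hyc hG
          ⟨hs.1.le, hs.2.trans ht.2⟩
    _ = _ := by rw [sub_zero, abs_of_nonneg ht.1]; ring

theorem iSup_norm_sub_le_of_isIntSol
    (hτc : Continuous fun p : EuclideanSpace ℝ (Fin n) × ℝ => τ p.1 p.2)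
    (hτb : ∀ u s, τ u s ∈ Icc τmin τmax)
    (hτL : ∀ u v s, |τ u s - τ v s| ≤ Lτ * ‖u - v‖) (hK : IntervalIntegrable K volume 0 τmax)
    (hFc : Continuous fun p : ℝ × EuclideanSpace ℝ (Fin n) × EuclideanSpace ℝ (Fin n) ×
      EuclideanSpace ℝ (Fin n) => F p.1 p.2.1 p.2.2.1 p.2.2.2)
    (hFL : ∀ s u v w u' v' w', ‖F s u v w - F s u' v' w'‖ ≤ LF * (‖u - u'‖ + ‖v - v'‖ + ‖w - w'‖))
    (hLF : 0 ≤ LF) (hLτ : 0 ≤ Lτ) (hL₀ : 0 ≤ L₀)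
    (hφL : ∀ a ∈ Icc (-τmax) (0 : ℝ), ∀ b ∈ Icc (-τmax) (0 : ℝ), ‖φ a - φ b‖ ≤ L₀ * |a - b|)
    (hT₀ : 0 ≤ T) (hT : T ≤ τmin)
    (hTc : T * (LF * (1 + L₀ * Lτ + ∫ v in (0 : ℝ)..τmax, |K v|)) ≤ 1 / 2)
    (hx : IsIntSol τmax τ K F φ T x) (hy : IsIntSol τmax τ K F ψ T y) :
    (⨆ t : Icc (-τmax) T, ‖x t.1 - y t.1‖) ≤
      2 * (1 + T * LF) * ⨆ θ : Icc (-τmax) (0 : ℝ), ‖φ θ.1 - ψ θ.1‖ := by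
  set D := ⨆ θ : Icc (-τmax) (0 : ℝ), ‖φ θ.1 - ψ θ.1‖
  set G := ⨆ t : Icc (-τmax) T, ‖x t.1 - y t.1‖
  have hτ : 0 ≤ τmax := by linarith [(hτb 0 0).1, (hτb 0 0).2]
  have hκ : 0 ≤ ∫ v in (0 : ℝ)..τmax, |K v| := integral_nonneg hτ fun _ _ => abs_nonneg _
  have hzero : (0 : ℝ) ∈ Icc (-τmax) T := ⟨by linarith, hT₀⟩
  have hcont : ContinuousOn (fun t => ‖x t - y t‖) (Icc (-τmax) T) := (hx.1.sub hy.1).norm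
  have hG : ∀ t ∈ Icc (-τmax) T, ‖x t - y t‖ ≤ G := fun t ht =>
    isCompact_Icc.le_ciSup_of_continuousOn hcont ht
  have hD : ∀ θ ∈ Icc (-τmax) (0 : ℝ), ‖φ θ - ψ θ‖ ≤ D := fun θ hθ =>
    isCompact_Icc.le_ciSup_of_continuousOn (f := fun θ => ‖φ θ - ψ θ‖)
      ((hcont.mono (Icc_subset_Icc le_rfl hT₀)).congr fun θ hθ => by
        simp only [hx.2.1 θ hθ, hy.2.1 θ hθ]) hθ
  have hD₀ : 0 ≤ D := (norm_nonneg _).trans (hD 0 ⟨hzero.1, le_rfl⟩)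
  have hG₀ : 0 ≤ G := (norm_nonneg _).trans (hG 0 hzero)
  have hpointwise : ∀ t ∈ Icc (-τmax) T, ‖x t - y t‖ ≤ (1 + T * LF) * D + G / 2 := by
    intro t ht
    rcases le_total t 0 with hneg | hpos
    · rw [hx.2.1 t ⟨ht.1, hneg⟩, hy.2.1 t ⟨ht.1, hneg⟩]
      linarith [hD t ⟨ht.1, hneg⟩, mul_nonneg (mul_nonneg hT₀ hLF) hD₀]
    · calc ‖x t - y t‖
          ≤ D + t * (LF * ((1 + L₀ * Lτ + ∫ v in (0 : ℝ)..τmax, |K v|) * G + D)) :=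
            norm_sub_le_of_isIntSol hτc hτb hτL hK hFc hFL hLF hLτ hL₀ hφL hT hx hy hD hG
              ⟨hpos, ht.2⟩
        _ ≤ D + T * (LF * ((1 + L₀ * Lτ + ∫ v in (0 : ℝ)..τmax, |K v|) * G + D)) := by
            gcongr
            exact ht.2
        _ = (1 + T * LF) * D + T * (LF * (1 + L₀ * Lτ + ∫ v in (0 : ℝ)..τmax, |K v|)) * G := by
            ring
        _ ≤ (1 + T * LF) * D + G / 2 := by linarith [mul_le_mul_of_nonneg_right hTc hG₀]
  have : Nonempty (Icc (-τmax) T) := ⟨⟨0, hzero⟩⟩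
  have hGD : G ≤ (1 + T * LF) * D + G / 2 := ciSup_le fun t => hpointwise t.1 t.2
  linarith

end Solutions

theorem stmt_8_general (n : ℕ) (τmin τmax Lτ LF L₀ R₀ : ℝ)
    (hτmin : 0 < τmin) (hττ : τmin ≤ τmax)
    (τ : EuclideanSpace ℝ (Fin n) → ℝ → ℝ)
    (hτc : Continuous fun p : EuclideanSpace ℝ (Fin n) × ℝ => τ p.1 p.2)
    (hτb : ∀ (u : EuclideanSpace ℝ (Fin n)) (s : ℝ), τ u s ∈ Icc τmin τmax)
    (hτL : ∀ (u v : EuclideanSpace ℝ (Fin n)) (s : ℝ), |τ u s - τ v s| ≤ Lτ * ‖u - v‖)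
    (K : ℝ → ℝ) (hK : IntervalIntegrable K volume 0 τmax)
    (F : ℝ → EuclideanSpace ℝ (Fin n) → EuclideanSpace ℝ (Fin n) →
      EuclideanSpace ℝ (Fin n) → EuclideanSpace ℝ (Fin n))
    (hFc : Continuous fun p : ℝ × EuclideanSpace ℝ (Fin n) × EuclideanSpace ℝ (Fin n) ×
      EuclideanSpace ℝ (Fin n) => F p.1 p.2.1 p.2.2.1 p.2.2.2)
    (hFL : ∀ (s : ℝ) (u v w u' v' w' : EuclideanSpace ℝ (Fin n)),
      ‖F s u v w - F s u' v' w'‖ ≤ LF * (‖u - u'‖ + ‖v - v'‖ + ‖w - w'‖)) :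
    ∃ T₀ > 0, ∃ C ≥ (0 : ℝ),
      ∀ φ ψ x y : ℝ → EuclideanSpace ℝ (Fin n),
        (∀ a ∈ Icc (-τmax) (0 : ℝ), ∀ b ∈ Icc (-τmax) (0 : ℝ),
          ‖φ a - φ b‖ ≤ L₀ * |a - b|) →
        (∀ a ∈ Icc (-τmax) (0 : ℝ), ∀ b ∈ Icc (-τmax) (0 : ℝ),
          ‖ψ a - ψ b‖ ≤ L₀ * |a - b|) →
        (∀ θ ∈ Icc (-τmax) (0 : ℝ), ‖φ θ‖ ≤ R₀) →
        (∀ θ ∈ Icc (-τmax) (0 : ℝ), ‖ψ θ‖ ≤ R₀) →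
        IsIntSol τmax τ K F φ T₀ x → IsIntSol τmax τ K F ψ T₀ y →
        (⨆ t : Icc (-τmax) T₀, ‖x t.1 - y t.1‖) ≤
          C * ⨆ θ : Icc (-τmax) (0 : ℝ), ‖φ θ.1 - ψ θ.1‖ := by
  have hκ : 0 ≤ ∫ v in (0 : ℝ)..τmax, |K v| :=
    integral_nonneg (hτmin.le.trans hττ) fun _ _ => abs_nonneg _
  set c := LF⁺ * (1 + L₀⁺ * Lτ⁺ + ∫ v in (0 : ℝ)..τmax, |K v|)
  set T₀ := min τmin (2 * c + 1)⁻¹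
  have hc : 0 ≤ c := by positivity
  have hTc : T₀ * c ≤ 1 / 2 := by
    calc T₀ * c ≤ (2 * c + 1)⁻¹ * c := mul_le_mul_of_nonneg_right (min_le_right _ _) hc
      _ ≤ 1 / 2 := by rw [inv_mul_le_iff₀ (by positivity)]; linarith
  refine ⟨T₀, by positivity, 2 * (1 + T₀ * LF⁺), by positivity, ?_⟩
  intro φ ψ x y hφL _ _ _ hx hy
  exact iSup_norm_sub_le_of_isIntSol hτc hτb
    (fun u v s => le_posPart_mul_of_le_mul (hτL u v s) (norm_nonneg _)) hK hFc
    (fun s u v w u' v' w' => le_posPart_mul_of_le_mul (hFL s u v w u' v' w') (by positivity))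
    (posPart_nonneg _) (posPart_nonneg _) (posPart_nonneg _)
    (fun a ha b hb => le_posPart_mul_of_le_mul (hφL a ha b hb) (abs_nonneg _))
    (by positivity) (min_le_left _ _) hTc hx hy

/-- Continuous dependence on the initial history: there exist `T₀ > 0` and `C ≥ 0`
such that any two solutions of the integral equation on `[−τ_max, T₀]` whose initial
histories are `L₀`-Lipschitz and bounded by `R₀` satisfy
`sup_{[−τ_max,T₀]} ‖x − y‖ ≤ C · sup_{[−τ_max,0]} ‖φ − ψ‖`. -/
theorem stmt_8 (n : ℕ) (hn : 1 ≤ n) (τmin τmax Lτ LF L₀ R₀ : ℝ)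
    (hτmin : 0 < τmin) (hττ : τmin ≤ τmax) (hL₀ : 0 < L₀) (hR₀ : 0 < R₀)
    (τ : EuclideanSpace ℝ (Fin n) → ℝ → ℝ)
    (hτc : Continuous fun p : EuclideanSpace ℝ (Fin n) × ℝ => τ p.1 p.2)
    (hτb : ∀ (u : EuclideanSpace ℝ (Fin n)) (s : ℝ), τ u s ∈ Icc τmin τmax)
    (hτL : ∀ (u v : EuclideanSpace ℝ (Fin n)) (s : ℝ), |τ u s - τ v s| ≤ Lτ * ‖u - v‖)
    (K : ℝ → ℝ) (hK : IntervalIntegrable K volume 0 τmax)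
    (F : ℝ → EuclideanSpace ℝ (Fin n) → EuclideanSpace ℝ (Fin n) →
      EuclideanSpace ℝ (Fin n) → EuclideanSpace ℝ (Fin n))
    (hFc : Continuous fun p : ℝ × EuclideanSpace ℝ (Fin n) × EuclideanSpace ℝ (Fin n) ×
      EuclideanSpace ℝ (Fin n) => F p.1 p.2.1 p.2.2.1 p.2.2.2)
    (hFL : ∀ (s : ℝ) (u v w u' v' w' : EuclideanSpace ℝ (Fin n)),
      ‖F s u v w - F s u' v' w'‖ ≤ LF * (‖u - u'‖ + ‖v - v'‖ + ‖w - w'‖)) :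
    ∃ T₀ > 0, ∃ C ≥ (0 : ℝ),
      ∀ φ ψ x y : ℝ → EuclideanSpace ℝ (Fin n),
        (∀ a ∈ Icc (-τmax) (0 : ℝ), ∀ b ∈ Icc (-τmax) (0 : ℝ),
          ‖φ a - φ b‖ ≤ L₀ * |a - b|) →
        (∀ a ∈ Icc (-τmax) (0 : ℝ), ∀ b ∈ Icc (-τmax) (0 : ℝ),
          ‖ψ a - ψ b‖ ≤ L₀ * |a - b|) →
        (∀ θ ∈ Icc (-τmax) (0 : ℝ), ‖φ θ‖ ≤ R₀) →
        (∀ θ ∈ Icc (-τmax) (0 : ℝ), ‖ψ θ‖ ≤ R₀) →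
        IsIntSol τmax τ K F φ T₀ x → IsIntSol τmax τ K F ψ T₀ y →
        (⨆ t : Icc (-τmax) T₀, ‖x t.1 - y t.1‖) ≤
          C * ⨆ θ : Icc (-τmax) (0 : ℝ), ‖φ θ.1 - ψ θ.1‖ :=
  stmt_8_general n τmin τmax Lτ LF L₀ R₀ hτmin hττ τ hτc hτb hτL K hK F hFc hFL
end
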